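/- Let f : ℂ → ℂ be analytic on the closed ball {|z| ≤ 1} with f(0) = 0 and |f′(z)| ≤ 1 + |f(z)|² for all |z| ≤ 1, and suppose 1 − ε ≤ |f′(0)| with ε := 10⁻¹⁰⁰. Let a_n := f⁽ⁿ⁾(0)/n! be the Taylor coefficients of f at 0. Then: (i) |f(z)| ≤ tan|z| for all |z| ≤ 1; (ii) 1 − ε ≤ |a₁| ≤ 1; and (iii) |a_n| ≤ (4/π)ⁿ for every n ≥ 1. -/

import Mathlib

open Real Set Filter Metric

lemma arctan_sub_le' {a b : ℝ} (ha : 0 ≤ a) (hab : a ≤ b) :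
    Real.arctan b - Real.arctan a ≤ (b - a) / (1 + a ^ 2) := by
  have h1 : (0:ℝ) < 1 + a ^ 2 := by positivity
  set F : ℝ → ℝ := fun x => x / (1 + a ^ 2) - Real.arctan x with hF
  have hd : ∀ x : ℝ, HasDerivAt F (1 / (1 + a ^ 2) - 1 / (1 + x ^ 2)) x := by
    intro x
    have := ((hasDerivAt_id x).div_const (1 + a ^ 2)).sub (Real.hasDerivAt_arctan x)
    simp only [one_div] at this ⊢
    exact this
  have hmono : MonotoneOn F (Set.Ici a) := by
    apply monotoneOn_of_deriv_nonneg (convex_Ici a)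
    · exact fun x _ => (hd x).continuousAt.continuousWithinAt
    · exact fun x _ => (hd x).differentiableAt.differentiableWithinAt
    · intro x hx
      rw [(hd x).deriv]
      rw [interior_Ici] at hx
      have hx2 : a ^ 2 ≤ x ^ 2 := by nlinarith [(Set.mem_Ioi.mp hx).le]
      have h2 : (0:ℝ) < 1 + x ^ 2 := by positivity
      rw [sub_nonneg, div_le_div_iff₀ h2 h1]
      nlinarith
  have hle := hmono Set.self_mem_Ici (show b ∈ Set.Ici a from hab) hab
  simp only [hF] at hle
  have hdiv : b/(1+a^2) - a/(1+a^2) = (b-a)/(1+a^2) := by ring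
  linarith

lemma tan_bound (f : ℂ → ℂ)
    (hf : AnalyticOnNhd ℂ f (Metric.closedBall (0 : ℂ) 1))
    (hf0 : f 0 = 0)
    (hderiv : ∀ z : ℂ, ‖z‖ ≤ 1 →
      ‖deriv f z‖ ≤ 1 + ‖f z‖ ^ 2) :
    ∀ z : ℂ, ‖z‖ ≤ 1 → ‖f z‖ ≤ Real.tan (‖z‖) := by
  intro z hz
  rcases eq_or_ne z 0 with rfl | hz0
  · simp [hf0]
  set s : ℝ := ‖z‖ with hs
  have hs0 : 0 < s := by simpa [hs] using norm_pos_iff.mpr hz0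
  set u : ℂ := z / (s : ℂ) with hu
  have hsne : (s : ℂ) ≠ 0 := by exact_mod_cast hs0.ne'
  have huabs : ‖u‖ = 1 := by
    rw [hu, norm_div, Complex.norm_real, Real.norm_eq_abs, abs_of_pos hs0, div_self hs0.ne']
  have hmem : ∀ t : ℝ, t ∈ Icc (0:ℝ) 1 → (t : ℂ) * u ∈ Metric.closedBall (0:ℂ) 1 := by
    intro t ht
    simp only [Metric.mem_closedBall, Complex.dist_eq, sub_zero]
    rw [norm_mul, Complex.norm_real, Real.norm_eq_abs, huabs, mul_one, abs_of_nonneg ht.1]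
    exact ht.2
  set g : ℝ → ℂ := fun t => f ((t : ℂ) * u) with hg
  have hgdiff : ∀ t : ℝ, t ∈ Icc (0:ℝ) 1 →
      HasDerivAt g (deriv f ((t:ℂ) * u) * u) t := by
    intro t ht
    have h1 : HasDerivAt f (deriv f ((t:ℂ) * u)) ((t:ℂ) * u) :=
      ((hf _ (hmem t ht)).differentiableAt).hasDerivAt
    have h2 : HasDerivAt (fun w : ℂ => f (w * u)) (deriv f ((t:ℂ) * u) * u) ((t:ℂ)) :=
      HasDerivAt.comp (t:ℂ) h1 (hasDerivAt_mul_const u)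
    exact h2.comp_ofReal
  have hgcont : ContinuousOn g (Icc (0:ℝ) 1) := fun t ht =>
    (hgdiff t ht).continuousAt.continuousWithinAt
  set h : ℝ → ℝ := fun t => Real.arctan (‖g t‖) with hh
  have hqb : ∀ t : ℝ, t ∈ Icc (0:ℝ) 1 → ‖deriv f ((t:ℂ)*u) * u‖
      ≤ 1 + (‖g t‖) ^ 2 := by
    intro t ht
    rw [norm_mul, huabs, mul_one]
    exact hderiv _ (by simpa [Metric.mem_closedBall, Complex.dist_eq] using hmem t ht)
  have key : ∀ x ∈ Icc (0:ℝ) 1, h x ≤ x := by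
    have := image_le_of_liminf_slope_right_le_deriv_boundary
      (f := h) (a := 0) (b := 1) (B := fun x => x) (B' := fun _ => 1)
      ?hcont ?h0 ?hBc ?hB' ?bound
    · intro x hx; exact this hx
    case hcont =>
      exact Real.continuous_arctan.comp_continuousOn
        (continuous_norm.comp_continuousOn hgcont)
    case h0 => simp [hh, hg, hf0]
    case hBc => exact continuousOn_id
    case hB' => exact fun x _ => hasDerivWithinAt_id x _
    case bound =>
      intro x hx r hr
      set a : ℝ := ‖g x‖ with ha
      have ha0 : 0 ≤ a := norm_nonneg _
      set r' : ℝ := (1 + r) / 2 with hr'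
      have hr1 : (1:ℝ) < r := hr
      have hr'1 : 1 < r' := by rw [hr']; linarith
      have hr'r : r' < r := by rw [hr']; linarith
      have hA : (0:ℝ) < 1 + a ^ 2 := by positivity
      set R : ℝ := r' * (1 + a ^ 2) with hR
      have hxI : x ∈ Icc (0:ℝ) 1 := ⟨hx.1, hx.2.le⟩
      have hqc : ContinuousWithinAt (fun t => 1 + (‖g t‖) ^ 2) (Icc (0:ℝ) 1) x :=
        continuousWithinAt_const.add
          (((continuous_norm.comp_continuousOn hgcont) x hxI).pow 2)
      have hlt : 1 + a ^ 2 < R := by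
        rw [hR]; nlinarith
      have hev : ∀ᶠ t in nhdsWithin x (Icc (0:ℝ) 1),
          1 + (‖g t‖) ^ 2 < R := hqc.eventually_lt_const hlt
      rw [Filter.eventually_iff, Metric.mem_nhdsWithin_iff] at hev
      obtain ⟨ε, hε, hball⟩ := hev
      set m : ℝ := min (x + ε / 2) 1 with hm
      have hxm : x < m := lt_min (by linarith) hx.2
      have hm1 : m ≤ 1 := min_le_right _ _
      have hIm : ∀ t : ℝ, t ∈ Icc x m → 1 + (‖g t‖) ^ 2 < R := by
        intro t ht
        have ht1 : t ∈ Icc (0:ℝ) 1 := ⟨hx.1.trans ht.1, ht.2.trans hm1⟩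
        have hd : dist t x < ε := by
          rw [Real.dist_eq, abs_of_nonneg (by linarith [ht.1])]
          have : t ≤ x + ε / 2 := ht.2.trans (min_le_left _ _)
          linarith
        exact hball ⟨hd, ht1⟩
      have hRpos : 0 < R := by positivity
      refine Filter.Eventually.frequently ?_
      filter_upwards [Ioc_mem_nhdsGT_of_mem (Set.left_mem_Ico.mpr hxm)] with w hw
      -- hw : w ∈ Ioc x m
      have hwx : 0 < w - x := by linarith [hw.1]
      have hwI : ∀ t : ℝ, t ∈ Icc x w → t ∈ Icc (0:ℝ) 1 :=
        fun t ht => ⟨hx.1.trans ht.1, (ht.2.trans hw.2).trans hm1⟩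
      have himg : ‖g w - g x‖ ≤ R * (w - x) := by
        have := norm_image_sub_le_of_norm_deriv_le_segment'
          (f := g) (f' := fun t => deriv f ((t:ℂ) * u) * u) (a := x) (b := w) (C := R)
          (fun t ht => (hgdiff t (hwI t ht)).hasDerivWithinAt)
          (fun t ht => by
            have ht' : t ∈ Icc x w := ⟨ht.1, ht.2.le⟩
            calc ‖deriv f ((t:ℂ) * u) * u‖ ≤ 1 + (‖g t‖) ^ 2 := hqb t (hwI t ht')
              _ ≤ R := (hIm t ⟨ht.1, ht.2.le.trans hw.2⟩).le)
          w (right_mem_Icc.mpr (by linarith))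
        exact this
      have hslope : h w - h x < r * (w - x) := by
        rcases le_or_gt (‖g w‖) a with hba | hab
        · have : h w ≤ h x := by
            simp only [hh]
            exact Real.arctan_strictMono.monotone hba
          nlinarith
        · have h1 : h w - h x ≤ (‖g w‖ - a) / (1 + a ^ 2) :=
            arctan_sub_le' ha0 hab.le
          have h2 : ‖g w‖ - a ≤ ‖g w - g x‖ := by
            have := abs_sub_abs_le_abs_sub (‖g w‖) (‖g x‖)
            calc ‖g w‖ - a = ‖g w‖ - ‖g x‖ := by rw [ha]
              _ ≤ ‖g w - g x‖ := norm_sub_norm_le _ _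
          have hnum : ‖g w‖ - a ≤ R * (w - x) := h2.trans himg
          have h3 : h w - h x ≤ R * (w - x) / (1 + a ^ 2) := by
            apply h1.trans
            gcongr
          have h4 : R * (w - x) / (1 + a ^ 2) = r' * (w - x) := by
            rw [hR]; field_simp
          rw [h4] at h3
          nlinarith
      rw [slope_def_field, div_lt_iff₀ hwx]
      exact hslope
  -- conclude
  have harctan : Real.arctan (‖f z‖) ≤ s := by
    have hzu : ((s:ℂ)) * u = z := by
      rw [hu, mul_div_cancel₀ _ hsne]
    have := key s ⟨hs0.le, hz⟩
    simpa [hh, hg, hzu] using this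
  have h1 : ‖f z‖ = Real.tan (Real.arctan (‖f z‖)) :=
    (Real.tan_arctan _).symm
  rw [h1]
  have hpi : (1:ℝ) < π / 2 := by
    have := Real.pi_gt_three; linarith
  apply Real.strictMonoOn_tan.monotoneOn
  · constructor
    · exact Real.neg_pi_div_two_lt_arctan _
    · exact Real.arctan_lt_pi_div_two _
  · constructor
    · linarith [hs0]
    · linarith [hz]
  · exact harctan

lemma tan_bound' (f : ℂ → ℂ)
    (hf : AnalyticOnNhd ℂ f (Metric.closedBall (0 : ℂ) 1))
    (htan : ∀ z : ℂ, ‖z‖ ≤ 1 → ‖f z‖ ≤ Real.tan (‖z‖)) :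
    ∀ n : ℕ, 1 ≤ n →
      ‖iteratedDeriv n f 0 / (Nat.factorial n : ℂ)‖ ≤ (4 / Real.pi) ^ n := by
  intro n _
  have hpi : (0:ℝ) < π := Real.pi_pos
  have hple : π ≤ 4 := by linarith [Real.pi_le_four]
  set R : NNReal := ⟨π / 4, by positivity⟩ with hRdef
  have hRr : (R : ℝ) = π / 4 := rfl
  have hR1 : (R : ℝ) ≤ 1 := by rw [hRr]; linarith
  have hRpos : 0 < R := by
    rw [← NNReal.coe_lt_coe, hRr]; positivity
  have hdiff : DifferentiableOn ℂ f (Metric.closedBall (0:ℂ) R) := by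
    intro w hw
    have : w ∈ Metric.closedBall (0:ℂ) 1 :=
      Metric.closedBall_subset_closedBall hR1 hw
    exact (hf w this).differentiableAt.differentiableWithinAt
  have hps : HasFPowerSeriesOnBall f (cauchyPowerSeries f 0 (R:ℝ)) 0 R :=
    hdiff.hasFPowerSeriesOnBall hRpos
  set p := cauchyPowerSeries f 0 (R:ℝ) with hp
  have hfs : (Nat.factorial n : ℕ) • p n (fun _ => (1:ℂ)) = iteratedFDeriv ℂ n f 0 (fun _ => 1) :=
    hps.factorial_smul 1 n
  have hiter : iteratedDeriv n f 0 = (Nat.factorial n : ℕ) • p n (fun _ => (1:ℂ)) := by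
    rw [hfs]; exact iteratedDeriv_eq_iteratedFDeriv
  -- bound on circle
  have hcirc : ∀ θ : ℝ, ‖f (circleMap 0 (R:ℝ) θ)‖ ≤ 1 := by
    intro θ
    have habs : ‖circleMap 0 (R:ℝ) θ‖ = π / 4 := by
      rw [norm_circleMap_zero, abs_of_nonneg R.coe_nonneg, hRr]
    have h := htan _ (by rw [habs]; linarith)
    rw [habs, Real.tan_pi_div_four] at h
    simpa using h
  have hccont : Continuous fun θ : ℝ => ‖f (circleMap 0 (R:ℝ) θ)‖ := by
    apply Continuous.norm
    refine continuous_iff_continuousAt.mpr fun θ => ?_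
    apply ContinuousAt.comp _ (continuous_circleMap 0 (R:ℝ)).continuousAt
    apply (hf _ _).differentiableAt.continuousAt
    simp only [Metric.mem_closedBall, Complex.dist_eq, sub_zero]
    rw [show ‖circleMap 0 (R:ℝ) θ‖ = |(R:ℝ)| from norm_circleMap_zero _ _,
      abs_of_nonneg R.coe_nonneg]
    exact hR1
  have hint : (∫ θ : ℝ in (0)..2 * π, ‖f (circleMap 0 (R:ℝ) θ)‖) ≤ 2 * π := by
    calc (∫ θ : ℝ in (0)..2 * π, ‖f (circleMap 0 (R:ℝ) θ)‖)
        ≤ ∫ _ : ℝ in (0)..2 * π, (1:ℝ) :=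
          intervalIntegral.integral_mono_on (by positivity)
            (hccont.intervalIntegrable _ _) intervalIntegrable_const (fun θ _ => hcirc θ)
      _ = 2 * π := by simp
  have hintnn : 0 ≤ (∫ θ : ℝ in (0)..2 * π, ‖f (circleMap 0 (R:ℝ) θ)‖) :=
    intervalIntegral.integral_nonneg (by positivity) (fun θ _ => norm_nonneg _)
  have hpn : ‖p n‖ ≤ (4 / π) ^ n := by
    have hb := norm_cauchyPowerSeries_le f 0 (R:ℝ) n
    rw [← hp] at hb
    apply hb.trans
    have h1 : (2 * π)⁻¹ * (∫ θ : ℝ in (0)..2 * π, ‖f (circleMap 0 (R:ℝ) θ)‖) ≤ 1 := by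
      rw [inv_mul_le_iff₀ (by positivity : (0:ℝ) < 2 * π)]
      linarith
    have h1' : 0 ≤ (2 * π)⁻¹ * (∫ θ : ℝ in (0)..2 * π, ‖f (circleMap 0 (R:ℝ) θ)‖) := by
      positivity
    have h2 : |(R:ℝ)|⁻¹ ^ n = (4 / π) ^ n := by
      rw [abs_of_nonneg R.coe_nonneg, hRr, inv_div]
    rw [h2]
    have h3 : (0:ℝ) ≤ (4/π)^n := by positivity
    nlinarith
  have hpn1 : ‖p n fun _ => (1:ℂ)‖ ≤ (4 / π) ^ n := by
    have hle := (p n).le_opNorm (fun _ => (1:ℂ))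
    simp only [norm_one, Finset.prod_const_one, mul_one] at hle
    exact hle.trans hpn
  have hiter' : iteratedDeriv n f 0 = (Nat.factorial n : ℂ) * (p n fun _ => (1:ℂ)) := by
    rw [hiter]; simp [nsmul_eq_mul]
  have hfac0 : (Nat.factorial n : ℝ) ≠ 0 := by
    exact_mod_cast (Nat.factorial_pos n).ne'
  rw [hiter', norm_div, norm_mul, Complex.norm_natCast]
  rw [mul_comm, mul_div_assoc, div_self hfac0, mul_one]
  simpa using hpn1

/-- Basic a priori estimates for a normalized meromorphic function of spherical derivative
at most one: `|f(z)| ≤ tan |z|`, `1 - ε ≤ |a₁| ≤ 1` and `|aₙ| ≤ (4/π)ⁿ` for the Taylor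
coefficients `aₙ = f⁽ⁿ⁾(0)/n!`. -/
theorem taylor_coeff_estimates (f : ℂ → ℂ)
    (hf : AnalyticOnNhd ℂ f (Metric.closedBall (0 : ℂ) 1))
    (hf0 : f 0 = 0)
    (hderiv : ∀ z : ℂ, ‖z‖ ≤ 1 →
      ‖deriv f z‖ ≤ 1 + ‖f z‖ ^ 2)
    (hlow : 1 - 10 ^ (-100 : ℤ) ≤ ‖deriv f 0‖) :
    (∀ z : ℂ, ‖z‖ ≤ 1 → ‖f z‖ ≤ Real.tan (‖z‖)) ∧
    (1 - 10 ^ (-100 : ℤ) ≤ ‖iteratedDeriv 1 f 0 / (Nat.factorial 1 : ℂ)‖ ∧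
      ‖iteratedDeriv 1 f 0 / (Nat.factorial 1 : ℂ)‖ ≤ 1) ∧
    (∀ n : ℕ, 1 ≤ n →
      ‖iteratedDeriv n f 0 / (Nat.factorial n : ℂ)‖ ≤ (4 / Real.pi) ^ n) := by
  have htan := tan_bound f hf hf0 hderiv
  refine ⟨htan, ⟨?_, ?_⟩, tan_bound' f hf htan⟩
  · simpa [iteratedDeriv_one, Nat.factorial] using hlow
  · have h := hderiv 0 (by simp)
    rw [hf0] at h
    simpa [iteratedDeriv_one, Nat.factorial] using h
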